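/- If a symmetric positive-definite matrix Σ solves the Lyapunov equation ΣH + HΣ = ηC where C = (1/B)H, H is symmetric positive definite, and η, B > 0, then Σ = (η/(2B))·I. -/

import Mathlib

/-! A solution `X` of `XH + HX = 0` anticommutes with `H`, hence commutes with `H * H` and
therefore with its square root `H`; then `2HX = 0`, and `X = 0` because `H` is invertible.
So the Lyapunov equation has at most one solution, and `(η/(2B))·I` is one. -/

open scoped MatrixOrder ComplexOrder

namespace Matrix.PosDef

variable {𝕜 n : Type*} [RCLike 𝕜] [Fintype n] [DecidableEq n]

theorem eq_zero_of_mul_add_mul_eq_zero {H X : Matrix n n 𝕜} (hH : H.PosDef)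
    (hX : X * H + H * X = 0) : X = 0 := by
  have hXH : X * H = -(H * X) := eq_neg_of_add_eq_zero_left hX
  have hsq : Commute (H * H) X := by
    simp only [Commute, SemiconjBy, mul_assoc, hXH, ← mul_assoc X, mul_neg, neg_mul, neg_neg]
  have hcomm : Commute H X := by
    have h : Commute (CFC.sqrt (H * H)) X := hsq.cfcₙ_nnreal NNReal.sqrt
    rwa [CFC.sqrt_mul_self H hH.posSemidef.nonneg] at h
  have hHX : (2 : 𝕜) • (H * X) = 0 := by rw [two_smul, ← hX, hcomm.eq, add_comm]
  exact hH.isUnit.mul_right_eq_zero.mp ((smul_eq_zero.mp hHX).resolve_left two_ne_zero)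

theorem eq_of_mul_add_mul_eq {H X Y : Matrix n n 𝕜} (hH : H.PosDef)
    (h : X * H + H * X = Y * H + H * Y) : X = Y :=
  sub_eq_zero.mp <| hH.eq_zero_of_mul_add_mul_eq_zero <| by
    rw [sub_mul, mul_sub, sub_add_sub_comm, h, sub_self]

end Matrix.PosDef

theorem stmt11_general {n : ℕ} (H S : Matrix (Fin n) (Fin n) ℝ) (η B : ℝ)
    (hH : H.PosDef)
    (heq : S * H + H * S = η • ((1 / B) • H)) :
    S = (η / (2 * B)) • (1 : Matrix (Fin n) (Fin n) ℝ) := by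
  refine hH.eq_of_mul_add_mul_eq ?_
  rw [heq, smul_one_mul, mul_smul_one, ← add_smul, smul_smul]
  congr 1
  ring

/-- If a symmetric positive-definite matrix `Σ` solves the Lyapunov equation
`ΣH + HΣ = ηC` where `C = (1/B)H`, `H` is symmetric positive definite, and `η, B > 0`,
then `Σ = (η/(2B))·I`. -/
theorem stmt11 {n : ℕ} (H S : Matrix (Fin n) (Fin n) ℝ) (η B : ℝ)
    (hη : 0 < η) (hB : 0 < B) (hH : H.PosDef) (hS : S.PosDef)
    (heq : S * H + H * S = η • ((1 / B) • H)) :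
    S = (η / (2 * B)) • (1 : Matrix (Fin n) (Fin n) ℝ) :=
  stmt11_general H S η B hH heq
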